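/- arXiv:2010.13039 — 3 statements merged into one kernel-verified Lean document; each statement's English description precedes it below -/
import Mathlib

section
/- For all real x, -log(1+exp(x)) = max over t in ℝ of (A(t)·x² - x/2 + C(t)), where A(t) = -tanh(t/2)/(4t) (extended by A(0) = -1/8) and C(t) = t/2 - log(1+exp(t)) + t·tanh(t/2)/4; moreover the maximum is attained at t = x. -/
noncomputable def Ajj (t : ℝ) : ℝ := if t = 0 then -1/8 else -(Real.tanh (t/2))/(4*t)

noncomputable def Cjj (t : ℝ) : ℝ :=
  t/2 - Real.log (1 + Real.exp t) + t * Real.tanh (t/2) / 4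

/-!
Since `log (1 + exp x) = x / 2 + log 2 + log (cosh (x / 2))`, the bound at `t ≠ 0` says that
`log (cosh u)` lies below its tangent at `u = a` (`a = t / 2`) when viewed as a function of `u ^ 2`.
The difference `tanh a / (2 * a) * u ^ 2 - log (cosh u)` has derivative
`u * (tanh a / a - tanh u / u)`, which changes sign at `|u| = |a|` because `tanh u / u` decreases
on `(0, ∞)`, `tanh` being concave there. At `t = 0` the bound is `cosh u ≤ exp (u ^ 2 / 2)`.
-/

open Real Set

namespace Real

theorem hasDerivAt_tanh (x : ℝ) : HasDerivAt tanh (1 - tanh x ^ 2) x := by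
  rw [show tanh = sinh / cosh from funext tanh_eq_sinh_div_cosh]
  refine ((hasDerivAt_sinh x).div (hasDerivAt_cosh x) (cosh_pos x).ne').congr_deriv ?_
  rw [Pi.div_apply]
  field_simp

theorem strictMono_tanh : StrictMono tanh :=
  strictMono_of_hasDerivAt_pos hasDerivAt_tanh fun x => by linarith [tanh_sq_lt_one x]

theorem tanh_nonneg {x : ℝ} (hx : 0 ≤ x) : 0 ≤ tanh x := by
  simpa using strictMono_tanh.monotone hx

theorem concaveOn_tanh : ConcaveOn ℝ (Ici 0) tanh := by
  refine AntitoneOn.concaveOn_of_deriv (convex_Ici 0)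
    (continuous_iff_continuousAt.2 fun x => (hasDerivAt_tanh x).continuousAt).continuousOn
    (fun x _ => (hasDerivAt_tanh x).differentiableAt.differentiableWithinAt) ?_
  intro x hx y hy hxy
  rw [interior_Ici] at hx hy
  simp only [(hasDerivAt_tanh _).deriv]
  have := pow_le_pow_left₀ (tanh_nonneg hx.le) (strictMono_tanh.monotone hxy) 2
  linarith

theorem antitoneOn_tanh_div_self : AntitoneOn (fun x => tanh x / x) (Ioi 0) := by
  intro x hx y hy hxy
  have := concaveOn_tanh.neg.secant_mono (a := 0) self_mem_Ici (mem_Ici.2 hx.le) (mem_Ici.2 hy.le)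
    hx.ne' hy.ne' hxy
  simp only [Pi.neg_apply, tanh_zero, neg_zero, sub_zero, neg_div] at this
  linarith

theorem hasDerivAt_log_cosh (x : ℝ) : HasDerivAt (fun y => log (cosh y)) (tanh x) x := by
  simpa [tanh_eq_sinh_div_cosh] using (hasDerivAt_cosh x).log (cosh_pos x).ne'

/-- `tanh a / (2 * a)` is the derivative of the concave function `s ↦ log (cosh √s)` at
`s = a ^ 2`, so this is its tangent line inequality. -/
theorem log_cosh_le_of_pos {a u : ℝ} (ha : 0 < a) (hu : 0 ≤ u) :
    log (cosh u) ≤ log (cosh a) + tanh a / (2 * a) * (u ^ 2 - a ^ 2) := by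
  set h : ℝ → ℝ := fun y => tanh a / (2 * a) * y ^ 2 - log (cosh y)
  have h_deriv (y : ℝ) : HasDerivAt h (y * (tanh a / a - tanh y / y)) y := by
    refine (((hasDerivAt_pow 2 y).const_mul _).sub (hasDerivAt_log_cosh y)).congr_deriv ?_
    rcases eq_or_ne y 0 with rfl | hy
    · simp
    · field_simp
      ring
  have h_cont : Continuous h := continuous_iff_continuousAt.2 fun y => (h_deriv y).continuousAt
  suffices h a ≤ h u by simp only [h] at this; linarith
  rcases le_total u a with hua | hau
  · refine antitoneOn_of_hasDerivWithinAt_nonpos (convex_Icc 0 a) h_cont.continuousOn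
      (fun y _ => (h_deriv y).hasDerivWithinAt) (fun y hy => ?_) ⟨hu, hua⟩
      ⟨ha.le, le_rfl⟩ hua
    rw [interior_Icc] at hy
    exact mul_nonpos_of_nonneg_of_nonpos hy.1.le
      (sub_nonpos.2 (antitoneOn_tanh_div_self hy.1 ha hy.2.le))
  · refine monotoneOn_of_hasDerivWithinAt_nonneg (convex_Ici a) h_cont.continuousOn
      (fun y _ => (h_deriv y).hasDerivWithinAt) (fun y hy => ?_) self_mem_Ici hau hau
    rw [interior_Ici] at hy
    exact mul_nonneg (ha.trans hy).le
      (sub_nonneg.2 (antitoneOn_tanh_div_self ha (ha.trans hy) hy.le))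

theorem log_cosh_le_of_ne_zero {a : ℝ} (ha : a ≠ 0) (u : ℝ) :
    log (cosh u) ≤ log (cosh a) + tanh a / (2 * a) * (u ^ 2 - a ^ 2) := by
  have h_even : tanh |a| / (2 * |a|) = tanh a / (2 * a) := by
    rcases abs_choice a with h | h <;> rw [h]
    rw [tanh_neg]
    ring
  have := log_cosh_le_of_pos (abs_pos.2 ha) (abs_nonneg u)
  rwa [cosh_abs, cosh_abs, sq_abs, sq_abs, h_even] at this

theorem log_cosh_le_half_sq (u : ℝ) : log (cosh u) ≤ u ^ 2 / 2 :=
  (log_le_log (cosh_pos u) (cosh_le_exp_half_sq u)).trans_eq (log_exp _)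

theorem log_one_add_exp (x : ℝ) : log (1 + exp x) = x / 2 + log 2 + log (cosh (x / 2)) := by
  have h : 1 + exp x = exp (x / 2) * (2 * cosh (x / 2)) := by
    have h_sq : exp (x / 2) * exp (x / 2) = exp x := by rw [← exp_add, add_halves]
    have h_inv : exp (x / 2) * exp (-(x / 2)) = 1 := by rw [← exp_add, add_neg_cancel, exp_zero]
    rw [cosh_eq]
    linear_combination -h_sq - h_inv
  rw [h, log_mul (exp_pos _).ne' (by positivity), log_exp,
    log_mul two_ne_zero (cosh_pos _).ne']
  ring

end Real

theorem Ajj_mul_sq (t : ℝ) : Ajj t * t ^ 2 = -(t * tanh (t / 2)) / 4 := by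
  unfold Ajj
  split_ifs with ht
  · simp [ht]
  · field_simp

theorem log_cosh_half_le (t x : ℝ) :
    log (cosh (x / 2)) ≤ log (cosh (t / 2)) - Ajj t * (x ^ 2 - t ^ 2) := by
  unfold Ajj
  split_ifs with ht
  · subst ht
    have := log_cosh_le_half_sq (x / 2)
    simp only [zero_div, cosh_zero, log_one]
    linarith
  · have := log_cosh_le_of_ne_zero (a := t / 2) (by simpa using ht) (x / 2)
    convert this using 2
    field_simp
    ring

theorem Ajj_mul_sq_sub_half_add_Cjj (t x : ℝ) :
    Ajj t * x ^ 2 - x / 2 + Cjj t = Ajj t * (x ^ 2 - t ^ 2) - x / 2 + t / 2 - log (1 + exp t) := by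
  rw [Cjj]
  linear_combination Ajj_mul_sq t

theorem stmt0 (x : ℝ) :
    IsGreatest {y : ℝ | ∃ t : ℝ, y = Ajj t * x^2 - x/2 + Cjj t}
      (-Real.log (1 + Real.exp x)) ∧
    Ajj x * x^2 - x/2 + Cjj x = -Real.log (1 + Real.exp x) := by
  have h_eq : Ajj x * x^2 - x/2 + Cjj x = -Real.log (1 + Real.exp x) := by
    rw [Ajj_mul_sq_sub_half_add_Cjj]
    ring
  refine ⟨⟨⟨x, h_eq.symm⟩, ?_⟩, h_eq⟩
  rintro y ⟨t, rfl⟩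
  rw [Ajj_mul_sq_sub_half_add_Cjj, log_one_add_exp, log_one_add_exp]
  linarith [log_cosh_half_le t x]
end

section
/- For any real numbers β₁, ..., β_{K-1}, one has log(1 + Σ_{j=1}^{K-1} e^{β_j}) ≤ Σ_{j=1}^{K-1} log(1 + e^{β_j}). -/
theorem stmt13 (K : ℕ) (β : Fin K → ℝ) :
    Real.log (1 + ∑ j, Real.exp (β j)) ≤ ∑ j, Real.log (1 + Real.exp (β j)) := by
  have key : ∀ (n : ℕ) (b : Fin n → ℝ),
      1 + ∑ j, Real.exp (b j) ≤ ∏ j, (1 + Real.exp (b j)) := by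
    intro n
    induction n with
    | zero => intro b; simp
    | succ m ih =>
      intro b
      rw [Fin.sum_univ_succ, Fin.prod_univ_succ]
      have h1 := ih (fun i => b i.succ)
      have h2 : (0:ℝ) ≤ ∑ j, Real.exp (b (Fin.succ j)) :=
        Finset.sum_nonneg fun i _ => (Real.exp_pos _).le
      have h3 : (0:ℝ) < Real.exp (b 0) := Real.exp_pos _
      nlinarith [h1, h2, h3]
  have hpos : (0:ℝ) < 1 + ∑ j, Real.exp (β j) := by
    have : (0:ℝ) ≤ ∑ j, Real.exp (β j) :=
      Finset.sum_nonneg fun i _ => (Real.exp_pos _).le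
    linarith
  calc Real.log (1 + ∑ j, Real.exp (β j))
      ≤ Real.log (∏ j, (1 + Real.exp (β j))) := Real.log_le_log hpos (key K β)
    _ = ∑ j, Real.log (1 + Real.exp (β j)) := by
        rw [Real.log_prod]
        intro i _
        positivity
end

section
/- Let a(t) = log(1 + e^t) and ρ₁ > 0 be such that for all t, h ∈ ℝ: a(t + h) ≥ a(t) + h·a'(t) + (1/2)·a''(t)·h²/(ρ₁|h| + 1). In particular, this holds with ρ₁ = 1, where a'(t) = e^t/(1+e^t) and a''(t) = e^t/(1+e^t)². -/
/-!
Put `p = eᵗ / (1 + eᵗ)`, so that `a(t + h) - a(t) = log (1 - p + p eʰ)` and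
`a''(t) = p (1 - p)`. Differentiating in `h` shows `log (1 - p + p eʰ) ≥ p h + p (1 - p) φ(h)`
for `h ≥ 0`, where `φ(x) = e⁻ˣ + x - 1`; the case `h ≤ 0` is the same inequality for `1 - p`
and `-h`. Finally `φ(x) ≥ x² / (2 (x + 1))` for `x ≥ 0`.
-/

open Real

lemma sq_div_le_exp_neg_add_sub_one {x : ℝ} (hx : 0 ≤ x) :
    x ^ 2 / (2 * (x + 1)) ≤ exp (-x) + x - 1 := by
  set ψ : ℝ → ℝ := fun y ↦ 2 * (y + 1) * (exp (-y) + y - 1) - y ^ 2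
  have hψ : ∀ y, HasDerivAt ψ (2 * y * (1 - exp (-y))) y := fun y ↦ by
    refine (((((hasDerivAt_id y).add_const 1).const_mul 2).mul
      (((hasDerivAt_neg y).exp.add (hasDerivAt_id y)).sub_const 1)).sub
        (hasDerivAt_pow 2 y)).congr_deriv ?_
    simp only [Pi.add_apply, id, Nat.cast_ofNat]
    ring
  -- `y` and `1 - e⁻ʸ` have the same sign
  have hψ' : ∀ y, 0 ≤ 2 * y * (1 - exp (-y)) := fun y ↦ by
    rcases le_total 0 y with hy | hy
    · have : exp (-y) ≤ 1 := exp_le_one_iff.2 (neg_nonpos.2 hy)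
      nlinarith
    · have : 1 ≤ exp (-y) := one_le_exp_iff.2 (neg_nonneg.2 hy)
      nlinarith
  have h0 : ψ 0 ≤ ψ x := monotone_of_hasDerivAt_nonneg hψ hψ' hx
  simp only [ψ, neg_zero, exp_zero] at h0
  rw [div_le_iff₀ (by positivity)]
  nlinarith

lemma one_sub_add_mul_exp_pos {p : ℝ} (hp₀ : 0 ≤ p) (hp₁ : p ≤ 1) (y : ℝ) :
    0 < 1 - p + p * exp y := by
  nlinarith [exp_pos y, mul_nonneg hp₀ (exp_pos y).le,
    mul_nonneg (sub_nonneg.2 hp₁) (exp_pos y).le]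

lemma log_one_sub_add_mul_exp_ge_of_nonneg {p h : ℝ} (hp₀ : 0 ≤ p) (hp₁ : p ≤ 1)
    (hh : 0 ≤ h) : p * h + p * (1 - p) * (exp (-h) + h - 1) ≤ log (1 - p + p * exp h) := by
  set G : ℝ → ℝ := fun y ↦
    log (1 - p + p * exp y) - (p * y + p * (1 - p) * (exp (-y) + y - 1))
  have hG : ∀ y, HasDerivAt G
      (p * (1 - p) ^ 2 * (exp y - 1) ^ 2 / (exp y * (1 - p + p * exp y))) y := fun y ↦ by
    have hD := one_sub_add_mul_exp_pos hp₀ hp₁ y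
    refine (((((hasDerivAt_exp y).const_mul p).const_add (1 - p)).log hD.ne').sub
      (((hasDerivAt_id y).const_mul p).add
        ((((hasDerivAt_neg y).exp.add (hasDerivAt_id y)).sub_const 1).const_mul
          (p * (1 - p))))).congr_deriv ?_
    rw [exp_neg]
    field_simp
    ring
  have hG' : ∀ y, 0 ≤ p * (1 - p) ^ 2 * (exp y - 1) ^ 2 / (exp y * (1 - p + p * exp y)) :=
    fun y ↦ by have := one_sub_add_mul_exp_pos hp₀ hp₁ y; positivity
  have h0 : G 0 ≤ G h := monotone_of_hasDerivAt_nonneg hG hG' hh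
  simpa only [G, exp_zero, mul_one, sub_add_cancel, log_one, mul_zero, neg_zero, add_zero, sub_self,
    sub_nonneg] using h0

lemma log_one_sub_add_mul_exp_ge {p : ℝ} (hp₀ : 0 ≤ p) (hp₁ : p ≤ 1) (h : ℝ) :
    p * h + p * (1 - p) * (exp (-|h|) + |h| - 1) ≤ log (1 - p + p * exp h) := by
  rcases le_total 0 h with hh | hh
  · rw [abs_of_nonneg hh]
    exact log_one_sub_add_mul_exp_ge_of_nonneg hp₀ hp₁ hh
  · rw [abs_of_nonpos hh]
    have hsymm : 1 - p + p * exp h = exp h * (1 - (1 - p) + (1 - p) * exp (-h)) := by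
      rw [exp_neg]; field_simp; ring
    have hq₀ : 0 ≤ 1 - p := sub_nonneg.2 hp₁
    have hq₁ : 1 - p ≤ 1 := by linarith
    have := log_one_sub_add_mul_exp_ge_of_nonneg hq₀ hq₁ (neg_nonneg.2 hh)
    rw [hsymm, log_mul (exp_pos h).ne' (one_sub_add_mul_exp_pos hq₀ hq₁ _).ne', log_exp]
    linarith

theorem stmt15 (t h : ℝ) :
    Real.log (1 + Real.exp (t + h)) ≥
      Real.log (1 + Real.exp t) + h * (Real.exp t / (1 + Real.exp t)) +
        (1/2) * (Real.exp t / (1 + Real.exp t)^2) * h^2 / (1 * |h| + 1) := by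
  set p := exp t / (1 + exp t) with hp
  have hp₁ : p ≤ 1 := div_le_one_of_le₀ (by linarith [exp_pos t]) (by positivity)
  have hlog : log (1 + exp (t + h)) - log (1 + exp t) = log (1 - p + p * exp h) := by
    rw [← log_div (by positivity) (by positivity), exp_add]
    congr 1
    rw [hp]
    field_simp
    ring
  have hvar : p * (1 - p) = exp t / (1 + exp t) ^ 2 := by rw [hp]; field_simp; ring
  have hquad : (1/2) * (exp t / (1 + exp t) ^ 2) * h ^ 2 / (1 * |h| + 1)
      = p * (1 - p) * (|h| ^ 2 / (2 * (|h| + 1))) := by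
    rw [hvar, sq_abs]; field_simp
  have hφ : p * (1 - p) * (|h| ^ 2 / (2 * (|h| + 1))) ≤ p * (1 - p) * (exp (-|h|) + |h| - 1) :=
    mul_le_mul_of_nonneg_left (sq_div_le_exp_neg_add_sub_one (abs_nonneg h))
      (mul_nonneg (by positivity) (sub_nonneg.2 hp₁))
  linarith [log_one_sub_add_mul_exp_ge (by positivity : 0 ≤ p) hp₁ h]
end
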